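/- Let m ≥ 1, k ≥ 0 and d_1,…,d_k ≥ 1 be integers with d_1 + ⋯ + d_k < m + 1. Let p = ∏_{j=1}^{k} (1 − X^{d_j}) ∈ ℚ[[X]], and let H ∈ ℚ[T] be the Hilbert polynomial of p with respect to the exponent m+1, i.e. the unique polynomial such that H(s) equals the coefficient of X^s in p·(1 − X)^{−(m+1)} for all sufficiently large natural numbers s. Then H(0) = 1. -/

import Mathlib

open PowerSeries

/-!
By uniqueness, `H` is the Hilbert polynomial of `P = ∏ⱼ (1 - X^{dⱼ})`, namely
`∑ᵢ Pᵢ · (T - i + 1)(T - i + 2)⋯(T - i + m) / m!`. At `T = 0` the `i`-th product contains the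
factor `0` whenever `1 ≤ i ≤ m`, and `deg P ≤ ∑ dⱼ ≤ m`, so only the constant term `P(0) = 1`
survives.
-/

namespace Polynomial

variable {F : Type*} [Field F]

lemma preHilbertPoly_eval_zero_of_pos_of_le {d k : ℕ} (hk : 0 < k) (hkd : k ≤ d) :
    (preHilbertPoly F d k).eval 0 = 0 := by
  have harg : (0 : F) - k + 1 = -((k - 1 : ℕ) : F) := by
    rw [Nat.cast_sub hk, Nat.cast_one]; ring
  simp only [preHilbertPoly, eval_smul, eval_comp, eval_add, eval_sub, eval_X, eval_C, eval_one,
    harg, ascPochhammer_eval_neg_coe_nat_of_lt (show k - 1 < d by omega), smul_zero]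

variable [CharZero F]

lemma preHilbertPoly_eval_zero_zero (d : ℕ) : (preHilbertPoly F d 0).eval 0 = 1 := by
  simpa using preHilbertPoly_eq_choose_sub_add F d (le_refl 0)

lemma hilbertPoly_eval_zero_of_natDegree_lt {p : F[X]} {d : ℕ} (hp : p.natDegree < d) :
    (hilbertPoly p d).eval 0 = p.coeff 0 := by
  obtain ⟨d, rfl⟩ : ∃ e, d = e + 1 := Nat.exists_eq_add_one.mpr (by omega)
  rw [hilbertPoly_succ, eval_finsetSum, Finset.sum_eq_single 0]
  · simp [preHilbertPoly_eval_zero_zero]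
  · intro k hk hk0
    have hkd : k ≤ d := by have := le_natDegree_of_mem_supp k hk; omega
    simp [preHilbertPoly_eval_zero_of_pos_of_le (Nat.pos_of_ne_zero hk0) hkd]
  · intro h0
    simp [notMem_support_iff.mp h0]

variable {R ι : Type*} [CommRing R]

lemma natDegree_prod_one_sub_X_pow_le (s : Finset ι) (d : ι → ℕ) :
    (∏ j ∈ s, (1 - X ^ d j : R[X])).natDegree ≤ ∑ j ∈ s, d j := by
  refine (natDegree_prod_le _ _).trans (Finset.sum_le_sum fun j _ => ?_)
  exact (natDegree_sub_le _ _).trans (max_le (by simp) (natDegree_X_pow_le _))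

lemma coeff_zero_prod_one_sub_X_pow (s : Finset ι) {d : ι → ℕ} (hd : ∀ j ∈ s, d j ≠ 0) :
    (∏ j ∈ s, (1 - X ^ d j : R[X])).coeff 0 = 1 := by
  rw [coeff_zero_eq_eval_zero, eval_prod]
  exact Finset.prod_eq_one fun j hj => by simp [hd j hj]

end Polynomial

theorem stmt5_general (m k : ℕ) (d : Fin k → ℕ) (hd : ∀ j, 1 ≤ d j)
    (hsum : (∑ j, d j) < m + 1)
    (p : ℚ⟦X⟧) (hp : p = ∏ j : Fin k, (1 - (PowerSeries.X : ℚ⟦X⟧) ^ (d j)))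
    (H : Polynomial ℚ)
    (hH : ∀ᶠ s : ℕ in Filter.atTop,
      H.eval (s : ℚ) =
        PowerSeries.coeff (R := ℚ) s (p * ((PowerSeries.invOneSubPow ℚ (m + 1) : (ℚ⟦X⟧)ˣ) : ℚ⟦X⟧))) :
    H.eval 0 = 1 := by
  set P : Polynomial ℚ := ∏ j, (1 - Polynomial.X ^ d j)
  have hpP : p = (P : ℚ⟦X⟧) := by
    rw [hp, ← Polynomial.coeToPowerSeries.ringHom_apply, map_prod]
    simp only [map_sub, map_one, map_pow, Polynomial.coeToPowerSeries.ringHom_apply,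
      Polynomial.coe_X]
  obtain ⟨N, hN⟩ := Filter.eventually_atTop.mp hH
  have hHP : H = Polynomial.hilbertPoly P (m + 1) :=
    Polynomial.eq_hilbertPoly_of_forall_coeff_eq_eval N fun n hn => by
      rw [hN n hn.le, hpP]
  rw [hHP, Polynomial.hilbertPoly_eval_zero_of_natDegree_lt
    ((Polynomial.natDegree_prod_one_sub_X_pow_le _ d).trans_lt hsum)]
  exact Polynomial.coeff_zero_prod_one_sub_X_pow _ fun j _ => Nat.pos_iff_ne_zero.mp (hd j)

/-- Second assertion of the Lemma in section 4: let `p = ∏ⱼ (1 - X^{dⱼ}) ∈ ℚ⟦X⟧` and let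
`H ∈ ℚ[T]` be the Hilbert polynomial of `p` with respect to the exponent `m + 1`, i.e. the
(unique) polynomial with `H(s) = coeff of X^s in p·(1-X)^{-(m+1)}` for all sufficiently
large `s`.  If `d₁ + ⋯ + d_k < m + 1`, then `H(0) = 1`. -/
theorem stmt5 (m k : ℕ) (hm : 1 ≤ m) (d : Fin k → ℕ) (hd : ∀ j, 1 ≤ d j)
    (hsum : (∑ j, d j) < m + 1)
    (p : ℚ⟦X⟧) (hp : p = ∏ j : Fin k, (1 - (PowerSeries.X : ℚ⟦X⟧) ^ (d j)))
    (H : Polynomial ℚ)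
    (hH : ∀ᶠ s : ℕ in Filter.atTop,
      H.eval (s : ℚ) =
        PowerSeries.coeff (R := ℚ) s (p * ((PowerSeries.invOneSubPow ℚ (m + 1) : (ℚ⟦X⟧)ˣ) : ℚ⟦X⟧))) :
    H.eval 0 = 1 :=
  stmt5_general m k d hd hsum p hp H hH
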